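/- arXiv:2209.08094 — 2 statements merged into one kernel-verified Lean document; each statement's English description precedes it below -/
import Mathlib

section
/- Boundedness of the dual variable: if A_{k+1} = A_k + ρ_k(X_{k+1} − Z_{k+1}) and X_{k+1} − Z_{k+1} can be written as U D U' − U D̂ V' for orthogonal-column matrices with diagonal entries satisfying |σᵢ − σ̂ᵢ| ≤ λ/ρ_k for all i = 1,…,M, then ‖A_{k+1}‖_F² ≤ λ²M. -/
/-!
The multiplier update collapses to `A_{k+1} = U Diag(ρ (σ - σ̂)) Vᵀ`, and multiplying by
matrices with orthonormal columns preserves the Frobenius norm, so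
`‖A_{k+1}‖_F² = ∑ ρ² (σᵢ - σ̂ᵢ)² ≤ M λ²`.
-/

open Matrix

noncomputable def frobNorm {m n : ℕ} (M : Matrix (Fin m) (Fin n) ℝ) : ℝ :=
  Real.sqrt (∑ i, ∑ j, (M i j) ^ 2)

theorem Matrix.sum_sum_sq_eq_trace_transpose_mul {m n R : Type*} [Fintype m] [Fintype n]
    [CommSemiring R] (A : Matrix m n R) :
    ∑ i, ∑ j, A i j ^ 2 = trace (Aᵀ * A) := by
  simp only [trace, diag, mul_apply, transpose_apply, sq]
  exact Finset.sum_comm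

theorem Matrix.trace_transpose_mul_self_mul_mul_transpose {m n k l R : Type*}
    [Fintype m] [Fintype n] [Fintype k] [Fintype l] [DecidableEq k] [DecidableEq l]
    [CommRing R] {U : Matrix m k R} {V : Matrix n l R} (hU : Uᵀ * U = 1) (hV : Vᵀ * V = 1)
    (D : Matrix k l R) :
    trace ((U * D * Vᵀ)ᵀ * (U * D * Vᵀ)) = trace (Dᵀ * D) := by
  have hcancel : (U * D * Vᵀ)ᵀ * (U * D * Vᵀ) = V * (Dᵀ * D) * Vᵀ := by
    simp only [transpose_mul, transpose_transpose, Matrix.mul_assoc]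
    rw [← Matrix.mul_assoc Uᵀ U, hU, Matrix.one_mul]
  rw [hcancel, trace_mul_comm, ← Matrix.mul_assoc, hV, Matrix.one_mul]

theorem frobNorm_mul_mul_transpose {m n k l : ℕ} {U : Matrix (Fin m) (Fin k) ℝ}
    {V : Matrix (Fin n) (Fin l) ℝ} (hU : Uᵀ * U = 1) (hV : Vᵀ * V = 1)
    (D : Matrix (Fin k) (Fin l) ℝ) :
    frobNorm (U * D * Vᵀ) = frobNorm D := by
  simp only [frobNorm, sum_sum_sq_eq_trace_transpose_mul,
    trace_transpose_mul_self_mul_mul_transpose hU hV]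

theorem frobNorm_diagonal {M : ℕ} (d : Fin M → ℝ) :
    frobNorm (diagonal d) = Real.sqrt (∑ i, d i ^ 2) := by
  simp [frobNorm, diagonal_apply]

theorem Real.sqrt_sum_sq_le_mul_sqrt_card {ι : Type*} [Fintype ι] {d : ι → ℝ} {c : ℝ}
    (h : ∀ i, |d i| ≤ c) :
    √(∑ i, d i ^ 2) ≤ c * √(Fintype.card ι) := by
  cases isEmpty_or_nonempty ι
  · simp
  have hc : 0 ≤ c := (abs_nonneg _).trans (h (Classical.arbitrary ι))
  calc √(∑ i, d i ^ 2)
      ≤ √(∑ _ : ι, c ^ 2) := Real.sqrt_le_sqrt <|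
        Finset.sum_le_sum fun i _ ↦ sq_le_sq.mpr <| (h i).trans (le_abs_self c)
    _ = c * √(Fintype.card ι) := by
        rw [Finset.sum_const, Finset.card_univ, nsmul_eq_mul, Real.sqrt_mul (Nat.cast_nonneg _),
          Real.sqrt_sq hc, mul_comm]

theorem dual_variable_bounded_general {m n M : ℕ}
    (ρ lam : ℝ) (hρ : 0 < ρ)
    (X Z A A' : Matrix (Fin m) (Fin n) ℝ)
    (U : Matrix (Fin m) (Fin M) ℝ) (V : Matrix (Fin n) (Fin M) ℝ)
    (hU : Uᵀ * U = 1) (hV : Vᵀ * V = 1)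
    (σ σhat : Fin M → ℝ)
    (hX : X + ρ⁻¹ • A = U * Matrix.diagonal σ * Vᵀ)
    (hZ : Z = U * Matrix.diagonal σhat * Vᵀ)
    (hdiff : ∀ i, |σ i - σhat i| ≤ lam / ρ)
    (hA' : A' = A + ρ • (X - Z)) :
    frobNorm A' ≤ lam * Real.sqrt M := by
  have hA'_svd : A' = U * diagonal (ρ • (σ - σhat)) * Vᵀ := by
    rw [hA', diagonal_smul, show diagonal (σ - σhat) = diagonal σ - diagonal σhat from
      (diagonal_sub σ σhat).symm, Matrix.mul_smul, Matrix.smul_mul, Matrix.mul_sub,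
      Matrix.sub_mul, ← hX, ← hZ, smul_sub, smul_sub, smul_add, smul_inv_smul₀ hρ.ne']
    abel
  have hentry (i : Fin M) : |(ρ • (σ - σhat)) i| ≤ lam := by
    rw [Pi.smul_apply, Pi.sub_apply, smul_eq_mul, abs_mul, abs_of_pos hρ]
    exact (le_div_iff₀' hρ).mp (hdiff i)
  rw [hA'_svd, frobNorm_mul_mul_transpose hU hV, frobNorm_diagonal]
  simpa using Real.sqrt_sum_sq_le_mul_sqrt_card hentry

/-- Boundedness of the dual variable in the ADMM iteration: if
`X_{k+1} + ρ_k⁻¹ A_k = U Diag(σ) Vᵀ` and `Z_{k+1} = U Diag(σ̂) Vᵀ` with `U, V`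
having orthonormal columns and `|σᵢ − σ̂ᵢ| ≤ λ/ρ_k` for all `i`, then
`A_{k+1} = A_k + ρ_k (X_{k+1} − Z_{k+1})` satisfies `‖A_{k+1}‖_F ≤ λ√M`. -/
theorem dual_variable_bounded {m n M : ℕ}
    (ρ lam : ℝ) (hρ : 0 < ρ) (hlam : 0 < lam)
    (X Z A A' : Matrix (Fin m) (Fin n) ℝ)
    (U : Matrix (Fin m) (Fin M) ℝ) (V : Matrix (Fin n) (Fin M) ℝ)
    (hU : Uᵀ * U = 1) (hV : Vᵀ * V = 1)
    (σ σhat : Fin M → ℝ)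
    (hX : X + ρ⁻¹ • A = U * Matrix.diagonal σ * Vᵀ)
    (hZ : Z = U * Matrix.diagonal σhat * Vᵀ)
    (hdiff : ∀ i, |σ i - σhat i| ≤ lam / ρ)
    (hA' : A' = A + ρ • (X - Z)) :
    frobNorm A' ≤ lam * Real.sqrt M :=
  dual_variable_bounded_general ρ lam hρ X Z A A' U V hU hV σ σhat hX hZ hdiff hA'
end

section
/- Monotone update of the bounded Lagrangian: if ‖A_{k+1} − A_k‖_F ≤ a for all k, ρ_k = μᵏρ₀ with μ > 1, ρ₀ > 0, and the increment identity L_{ρ_{k+1}}(k+1) = L_{ρ_k}(k+1 via A_k) + ((ρ_{k+1}+ρ_k)/(2ρ_k²))‖A_{k+1}−A_k‖_F² holds, and each ADMM step does not increase L (L_{ρ_k}(X_{k+1},Z_{k+1},A_k) ≤ L_{ρ_k}(X_k,Z_k,A_k)), then L_{ρ_k}(X_{k+1},Z_{k+1},A_k) ≤ L_{ρ₀}(X_1,Z_1,A_0) + (a²/ρ₀)·Σ_{j=0}^∞ μ^{1−j}, hence the Lagrangian sequence is bounded above. -/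
/-!
With `ρ_k = μᵏρ₀` the increment allowed at step `k` is `a²(μ + 1)/(2ρ₀) · μ⁻ᵏ`, a geometric
sequence. Telescoping bounds `L_k - L_0` by its partial sums, hence by
`a²(μ + 1)/(2ρ₀) · μ/(μ - 1) ≤ a²μ²/(ρ₀(μ - 1))`.
-/

open Finset

theorem le_add_sum_of_le_add {u d : ℕ → ℝ} (h : ∀ k, u (k + 1) ≤ u k + d k) (k : ℕ) :
    u k ≤ u 0 + ∑ j ∈ range k, d j := by
  induction k with
  | zero => simp
  | succ k ih => rw [sum_range_succ]; linarith [h k]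

theorem geom_sum_inv_le_div_sub_one {μ : ℝ} (hμ : 1 < μ) (k : ℕ) :
    ∑ j ∈ range k, μ⁻¹ ^ j ≤ μ / (μ - 1) := by
  have hμ0 : 0 < μ := zero_lt_one.trans hμ
  calc ∑ j ∈ range k, μ⁻¹ ^ j = ∑ j ∈ Ico 0 k, μ⁻¹ ^ j := by rw [range_eq_Ico]
    _ ≤ μ⁻¹ ^ 0 / (1 - μ⁻¹) :=
        geom_sum_Ico_le_of_lt_one (inv_nonneg.2 hμ0.le) (inv_lt_one_of_one_lt₀ hμ)
    _ = μ / (μ - 1) := by field_simp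

theorem geometric_penalty_increment {μ ρ₀ : ℝ} (hμ : μ ≠ 0) (hρ₀ : ρ₀ ≠ 0) (k : ℕ) :
    (μ ^ (k + 1) * ρ₀ + μ ^ k * ρ₀) / (2 * (μ ^ k * ρ₀) ^ 2) = (μ + 1) / (2 * ρ₀) * μ⁻¹ ^ k := by
  rw [inv_pow]
  field_simp
  ring

theorem bounded_lagrangian_sequence_general
    (μ ρ₀ a : ℝ) (hμ : 1 < μ) (hρ₀ : 0 < ρ₀)
    (ρ : ℕ → ℝ) (hρ : ∀ k, ρ k = μ ^ k * ρ₀)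
    (L : ℕ → ℝ)
    (hstep : ∀ k, L (k + 1) ≤ L k + ((ρ (k + 1) + ρ k) / (2 * (ρ k) ^ 2)) * a ^ 2) :
    ∀ k, L k ≤ L 0 + a ^ 2 * μ ^ 2 / (ρ₀ * (μ - 1)) := by
  have hμ0 : 0 < μ := zero_lt_one.trans hμ
  set c := a ^ 2 * (μ + 1) / (2 * ρ₀)
  have hgeom : ∀ k, L (k + 1) ≤ L k + c * μ⁻¹ ^ k := fun k => by
    have h := hstep k
    rw [hρ, hρ, geometric_penalty_increment hμ0.ne' hρ₀.ne'] at h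
    exact h.trans_eq (by ring)
  have hc_bound : c * (μ / (μ - 1)) ≤ a ^ 2 * μ ^ 2 / (ρ₀ * (μ - 1)) := by
    have hμ1 : 0 < μ - 1 := sub_pos.2 hμ
    calc c * (μ / (μ - 1)) = a ^ 2 * μ * (μ + 1) / (2 * ρ₀ * (μ - 1)) := by
          simp only [c]; field_simp
      _ ≤ a ^ 2 * μ * (2 * μ) / (2 * ρ₀ * (μ - 1)) := by gcongr; linarith
      _ = a ^ 2 * μ ^ 2 / (ρ₀ * (μ - 1)) := by field_simp
  intro k
  calc L k ≤ L 0 + ∑ j ∈ range k, c * μ⁻¹ ^ j := le_add_sum_of_le_add hgeom k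
    _ = L 0 + c * ∑ j ∈ range k, μ⁻¹ ^ j := by rw [mul_sum]
    _ ≤ L 0 + c * (μ / (μ - 1)) := by
        gcongr
        exact geom_sum_inv_le_div_sub_one hμ k
    _ ≤ L 0 + a ^ 2 * μ ^ 2 / (ρ₀ * (μ - 1)) := by gcongr

/-- Monotone update of the bounded Lagrangian (abstract real-sequence form): if
`L_{k+1} ≤ L_k + ((ρ_{k+1} + ρ_k)/(2ρ_k²)) a²` with `ρ_k = μᵏρ₀`, `μ > 1`,
`ρ₀ > 0`, `a ≥ 0`, then `L_k ≤ L_0 + a²μ²/(ρ₀(μ − 1))` for all `k`;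
the Lagrangian sequence is bounded above. -/
theorem bounded_lagrangian_sequence
    (μ ρ₀ a : ℝ) (hμ : 1 < μ) (hρ₀ : 0 < ρ₀) (ha : 0 ≤ a)
    (ρ : ℕ → ℝ) (hρ : ∀ k, ρ k = μ ^ k * ρ₀)
    (L : ℕ → ℝ)
    (hstep : ∀ k, L (k + 1) ≤ L k + ((ρ (k + 1) + ρ k) / (2 * (ρ k) ^ 2)) * a ^ 2) :
    ∀ k, L k ≤ L 0 + a ^ 2 * μ ^ 2 / (ρ₀ * (μ - 1)) :=
  bounded_lagrangian_sequence_general μ ρ₀ a hμ hρ₀ ρ hρ L hstep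
end
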